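/- arXiv:2305.16773 — 6 statements merged into one kernel-verified Lean document; each statement's English description precedes it below -/
import Mathlib

section
/- Let V' be a maximal chain of a finite digraph G with respect to the reachability preorder. Then the subdigraph induced by V' has a unique sink and a unique source; moreover every vertex of this sink is an upper bound of V' and every vertex of this source is a lower bound of V'. -/
/-!
If a path from `u` to `v`, both in a maximal chain `V'`, leaves `V'` at some `w`, then by
maximality some `c ∈ V'` is incomparable with `w`; comparability inside `V'` forces `u ⇝ c ⇝ v`
with `c` strictly between `u` and `v`. Induction on the part of `V'` between the endpoints thus
reroutes every such path inside `V'`. Hence every vertex of `V'` reaches a top element `m` of the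
finite chain inside `V'`, which makes the vertices reachable from `m` inside `V'` the unique sink.
Sources are the sinks of the reversed digraph.
-/

variable {V A : Type*}

/-- Reachability by a directed path (`u ⇝ v`). -/
def Reaches (tail head : A → V) : V → V → Prop :=
  Relation.ReflTransGen (fun u v => ∃ a, tail a = u ∧ head a = v)

/-- A chain for the reachability preorder. -/
def IsChainD (tail head : A → V) (C : Set V) : Prop :=
  ∀ u ∈ C, ∀ v ∈ C, Reaches tail head u v ∨ Reaches tail head v u

/-- A maximal chain. -/
def IsMaximalChainD (tail head : A → V) (C : Set V) : Prop :=
  IsChainD tail head C ∧ ∀ C', IsChainD tail head C' → C ⊆ C' → C = C'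

/-- One step inside the induced subdigraph on `W`. -/
def StepIn (tail head : A → V) (W : Set V) (u v : V) : Prop :=
  ∃ a, tail a = u ∧ head a = v ∧ u ∈ W ∧ v ∈ W

/-- Reachability inside the induced subdigraph on `W`. -/
def ReachesIn (tail head : A → V) (W : Set V) : V → V → Prop :=
  Relation.ReflTransGen (StepIn tail head W)

/-- Strongly connected component of the induced subdigraph on `W`. -/
def IsSCCIn (tail head : A → V) (W : Set V) (C : Set V) : Prop :=
  C ⊆ W ∧ C.Nonempty ∧ (∀ u ∈ C, ∀ v ∈ C, ReachesIn tail head W u v) ∧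
    ∀ u ∈ C, ∀ v ∈ W, ReachesIn tail head W u v → ReachesIn tail head W v u → v ∈ C

/-- A source of the induced subdigraph on `W`: an SCC with no arcs entering it from its
complement in `W`. -/
def IsSourceIn (tail head : A → V) (W : Set V) (F : Set V) : Prop :=
  IsSCCIn tail head W F ∧ ∀ a, tail a ∈ W → head a ∈ F → tail a ∈ F

/-- A sink of the induced subdigraph on `W`: an SCC with no arcs leaving it into its
complement in `W`. -/
def IsSinkIn (tail head : A → V) (W : Set V) (S : Set V) : Prop :=
  IsSCCIn tail head W S ∧ ∀ a, head a ∈ W → tail a ∈ S → head a ∈ S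

section

variable {tail head : A → V} {W C S : Set V} {u v w : V}

theorem reaches_swap_iff : Reaches head tail u v ↔ Reaches tail head v u := by
  unfold Reaches
  rw [← Relation.reflTransGen_swap]
  simp only [and_comm]

theorem reachesIn_swap_iff : ReachesIn head tail W u v ↔ ReachesIn tail head W v u := by
  have hstep : StepIn head tail W = Function.swap (StepIn tail head W) := by
    funext x y
    simp only [StepIn, Function.swap]
    grind
  rw [ReachesIn, ReachesIn, hstep, Relation.reflTransGen_swap]

theorem IsChainD.swap (hC : IsChainD tail head C) : IsChainD head tail C := fun u hu v hv =>
  (hC u hu v hv).symm.imp reaches_swap_iff.2 reaches_swap_iff.2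

theorem IsMaximalChainD.swap (hC : IsMaximalChainD tail head C) :
    IsMaximalChainD head tail C :=
  ⟨hC.1.swap, fun C' hC' hsub => hC.2 C' hC'.swap hsub⟩

theorem IsSCCIn.swap (hS : IsSCCIn tail head W S) : IsSCCIn head tail W S := by
  obtain ⟨hsub, hne, hconn, hmax⟩ := hS
  exact ⟨hsub, hne, fun u hu v hv => reachesIn_swap_iff.2 (hconn v hv u hu),
    fun u hu v hv huv hvu => hmax u hu v hv (reachesIn_swap_iff.1 hvu) (reachesIn_swap_iff.1 huv)⟩

theorem isSourceIn_iff_isSinkIn_swap : IsSourceIn tail head W S ↔ IsSinkIn head tail W S :=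
  ⟨fun ⟨hscc, hin⟩ => ⟨hscc.swap, hin⟩, fun ⟨hscc, hout⟩ => ⟨hscc.swap, hout⟩⟩

theorem ReachesIn.reaches (h : ReachesIn tail head W u v) : Reaches tail head u v :=
  Relation.ReflTransGen.mono (fun _ _ ⟨a, hu, hv, _⟩ => ⟨a, hu, hv⟩) _ _ h

theorem ReachesIn.mem (h : ReachesIn tail head W u v) (hu : u ∈ W) : v ∈ W := by
  induction h with
  | refl => exact hu
  | tail _ step _ =>
    obtain ⟨_, _, _, _, hv⟩ := step
    exact hv

theorem IsSinkIn.mem_of_reachesIn (hS : IsSinkIn tail head W S) (hu : u ∈ S)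
    (h : ReachesIn tail head W u v) : v ∈ S := by
  induction h with
  | refl => exact hu
  | tail _ step ih =>
    obtain ⟨a, rfl, rfl, -, hv⟩ := step
    exact hS.2 a hv ih

theorem Reaches.reachesIn_or_exists_not_mem (h : Reaches tail head u v) (hv : v ∈ W) :
    ReachesIn tail head W u v ∨
      ∃ w ∉ W, Reaches tail head u w ∧ Reaches tail head w v := by
  induction h with
  | refl => exact .inl .refl
  | @tail x y hux step ih =>
    obtain ⟨a, rfl, rfl⟩ := step
    by_cases hx : tail a ∈ W
    · rcases ih hx with h | ⟨w, hw, huw, hwx⟩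
      · exact .inl (h.tail ⟨a, rfl, rfl, hx, hv⟩)
      · exact .inr ⟨w, hw, huw, hwx.tail ⟨a, rfl, rfl⟩⟩
    · exact .inr ⟨tail a, hx, hux, .single ⟨a, rfl, rfl⟩⟩

theorem IsMaximalChainD.exists_not_reaches (hC : IsMaximalChainD tail head C) (hw : w ∉ C) :
    ∃ c ∈ C, ¬ Reaches tail head c w ∧ ¬ Reaches tail head w c := by
  by_contra! hcomp
  have hchain : IsChainD tail head (insert w C) := by
    rintro x (rfl | hx) y (rfl | hy)
    · exact .inl .refl
    · exact (em (Reaches tail head y x)).elim .inr fun h => .inl (hcomp y hy h)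
    · exact (em (Reaches tail head x y)).elim .inl fun h => .inr (hcomp x hx h)
    · exact hC.1 x hx y hy
  exact hw ((hC.2 _ hchain (Set.subset_insert w C)).symm ▸ Set.mem_insert w C)

theorem IsMaximalChainD.reachesIn_of_reaches [Finite V] (hC : IsMaximalChainD tail head C)
    (hu : u ∈ C) (hv : v ∈ C) (huv : Reaches tail head u v) : ReachesIn tail head C u v := by
  induction hI : {c ∈ C | Reaches tail head u c ∧ Reaches tail head c v}
    using WellFoundedLT.induction generalizing u v with
  | _ I ih =>
    subst hI
    rcases huv.reachesIn_or_exists_not_mem hv with h | ⟨w, hw, huw, hwv⟩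
    · exact h
    obtain ⟨c, hc, hcw, hwc⟩ := hC.exists_not_reaches hw
    have hcu : ¬ Reaches tail head c u := fun h => hcw (h.trans huw)
    have hvc : ¬ Reaches tail head v c := fun h => hwc (hwv.trans h)
    have huc := (hC.1 u hu c hc).resolve_right hcu
    have hcv := (hC.1 c hc v hv).resolve_right hvc
    refine (ih _ ?_ hu hc huc rfl).trans (ih _ ?_ hc hv hcv rfl)
    · exact ⟨fun x hx => ⟨hx.1, hx.2.1, hx.2.2.trans hcv⟩,
        fun hsub => hvc (hsub ⟨hv, huv, .refl⟩).2.2⟩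
    · exact ⟨fun x hx => ⟨hx.1, huc.trans hx.2.1, hx.2.2⟩,
        fun hsub => hcu (hsub ⟨hu, .refl, huv⟩).2.1⟩

theorem IsMaximalChainD.nonempty [Nonempty V] (hC : IsMaximalChainD tail head C) :
    C.Nonempty := by
  obtain ⟨v⟩ := ‹Nonempty V›
  have hsingleton : IsChainD tail head {v} := by
    rintro x rfl y rfl
    exact .inl .refl
  rw [Set.nonempty_iff_ne_empty]
  rintro rfl
  exact Set.singleton_ne_empty v (hC.2 {v} hsingleton (Set.empty_subset _)).symm

theorem IsChainD.exists_forall_reaches (hC : IsChainD tail head C) (hfin : C.Finite)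
    (hne : C.Nonempty) : ∃ m ∈ C, ∀ c ∈ C, Reaches tail head c m := by
  obtain ⟨m, hm, hmax⟩ := hfin.exists_maximalFor (fun v => {c | Reaches tail head c v}) C hne
  refine ⟨m, hm, fun c hc => (hC c hc m hm).elim id fun hmc => ?_⟩
  exact hmax hc (fun x hxm => hxm.trans hmc) .refl

theorem IsMaximalChainD.exists_forall_reachesIn [Finite V] [Nonempty V]
    (hC : IsMaximalChainD tail head C) : ∃ m ∈ C, ∀ u ∈ C, ReachesIn tail head C u m := by
  obtain ⟨m, hm, htop⟩ := hC.1.exists_forall_reaches C.toFinite hC.nonempty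
  exact ⟨m, hm, fun u hu => hC.reachesIn_of_reaches hu hm (htop u hu)⟩

theorem isSinkIn_iff_of_forall_reachesIn {m : V} (hm : m ∈ W)
    (htop : ∀ u ∈ W, ReachesIn tail head W u m) :
    IsSinkIn tail head W S ↔ S = {v | ReachesIn tail head W m v} := by
  constructor
  · intro hS
    obtain ⟨s, hs⟩ := hS.1.2.1
    have hmS : m ∈ S := hS.mem_of_reachesIn hs (htop s (hS.1.1 hs))
    ext x
    exact ⟨hS.1.2.2.1 m hmS x, hS.mem_of_reachesIn hmS⟩
  · rintro rfl
    refine ⟨⟨fun v hv => hv.mem hm, ⟨m, .refl⟩, ?_, fun u hu v _ huv _ => hu.trans huv⟩, ?_⟩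
    · exact fun u hu v hv => (htop u (hu.mem hm)).trans hv
    · intro a hhead htail
      exact htail.tail ⟨a, rfl, rfl, htail.mem hm, hhead⟩

theorem IsMaximalChainD.existsUnique_isSinkIn [Finite V] [Nonempty V]
    (hC : IsMaximalChainD tail head C) : ∃! S, IsSinkIn tail head C S := by
  obtain ⟨m, hm, htop⟩ := hC.exists_forall_reachesIn
  exact ⟨_, (isSinkIn_iff_of_forall_reachesIn hm htop).2 rfl,
    fun S hS => (isSinkIn_iff_of_forall_reachesIn hm htop).1 hS⟩

theorem IsMaximalChainD.reaches_of_isSinkIn [Finite V] [Nonempty V]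
    (hC : IsMaximalChainD tail head C) (hS : IsSinkIn tail head C S) {s : V} (hs : s ∈ S)
    (hu : u ∈ C) : Reaches tail head u s := by
  obtain ⟨m, hm, htop⟩ := hC.exists_forall_reachesIn
  rw [isSinkIn_iff_of_forall_reachesIn hm htop] at hS
  subst hS
  exact ReachesIn.reaches ((htop u hu).trans hs)

end

theorem stmt_8_general [Fintype V] [Nonempty V] (tail head : A → V)
    (V' : Set V) (hV' : IsMaximalChainD tail head V') :
    (∃! S : Set V, IsSinkIn tail head V' S) ∧
    (∃! F : Set V, IsSourceIn tail head V' F) ∧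
    (∀ S : Set V, IsSinkIn tail head V' S → ∀ s ∈ S, ∀ u ∈ V', Reaches tail head u s) ∧
    (∀ F : Set V, IsSourceIn tail head V' F → ∀ f ∈ F, ∀ u ∈ V', Reaches tail head f u) := by
  refine ⟨hV'.existsUnique_isSinkIn, ?_, fun S hS s hs u hu => hV'.reaches_of_isSinkIn hS hs hu,
    fun F hF f hf u hu => ?_⟩
  · simpa only [isSourceIn_iff_isSinkIn_swap] using hV'.swap.existsUnique_isSinkIn
  · rw [isSourceIn_iff_isSinkIn_swap] at hF
    exact reaches_swap_iff.1 (hV'.swap.reaches_of_isSinkIn hF hf hu)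

/-- If `V'` is a maximal chain of a finite digraph, the induced subdigraph on `V'` has a
unique sink and a unique source; every vertex of the sink is an upper bound of `V'` and
every vertex of the source is a lower bound of `V'`. -/
theorem stmt_8 [Fintype V] [Fintype A] [Nonempty V] (tail head : A → V)
    (V' : Set V) (hV' : IsMaximalChainD tail head V') :
    (∃! S : Set V, IsSinkIn tail head V' S) ∧
    (∃! F : Set V, IsSourceIn tail head V' F) ∧
    (∀ S : Set V, IsSinkIn tail head V' S → ∀ s ∈ S, ∀ u ∈ V', Reaches tail head u s) ∧
    (∀ F : Set V, IsSourceIn tail head V' F → ∀ f ∈ F, ∀ u ∈ V', Reaches tail head f u) :=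
  stmt_8_general tail head V' hV'
end

section
/- Let F be a source of a finite weighted digraph (G,m). Then the compression of the in Laplacian L^+ to ℓ²(F,m) equals the in Laplacian of the induced subdigraph on F. Analogously, for a sink S, the compression of the out Laplacian L^- to ℓ²(S,m) equals the out Laplacian of the induced subdigraph on S. -/
open Finset

variable {V A : Type*}

/-- A source: the vertex set of an SCC with no arcs entering it from its complement. -/
def IsSourceF (tail head : A → V) (F : Finset V) : Prop :=
  F.Nonempty ∧ (∀ u ∈ F, ∀ v ∈ F, Reaches tail head u v) ∧
    (∀ u ∈ F, ∀ v, Reaches tail head u v → Reaches tail head v u → v ∈ F) ∧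
    (∀ a, head a ∈ F → tail a ∈ F)

/-- A sink: the vertex set of an SCC with no arcs leaving it into its complement. -/
def IsSinkF (tail head : A → V) (S : Finset V) : Prop :=
  S.Nonempty ∧ (∀ u ∈ S, ∀ v ∈ S, Reaches tail head u v) ∧
    (∀ u ∈ S, ∀ v, Reaches tail head u v → Reaches tail head v u → v ∈ S) ∧
    (∀ a, tail a ∈ S → head a ∈ S)

/-- The in Laplacian `L⁺ = (d⁺)* d` in its explicit form. -/
noncomputable def Lplus [Fintype A] [DecidableEq V] (tail head : A → V)
    (mV : V → ℝ) (mA : A → ℝ) (φ : V → ℂ) (v : V) : ℂ :=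
  (mV v : ℂ)⁻¹ * ∑ a ∈ univ.filter (fun a => head a = v), (φ v - φ (tail a)) * (mA a : ℂ)

/-- The out Laplacian `L⁻ = (d⁻)* d` in its explicit form. -/
noncomputable def Lminus [Fintype A] [DecidableEq V] (tail head : A → V)
    (mV : V → ℝ) (mA : A → ℝ) (φ : V → ℂ) (v : V) : ℂ :=
  (mV v : ℂ)⁻¹ * ∑ a ∈ univ.filter (fun a => tail a = v), (φ v - φ (head a)) * (mA a : ℂ)

/-- The compression `ι* ∘ L⁺ ∘ ι` of the in Laplacian to a source `F` (extension by zero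
followed by restriction) equals the in Laplacian of the subdigraph induced by `F`; the
analogous statement holds for the out Laplacian compressed to a sink `S`. -/
theorem stmt_11 [Fintype V] [Fintype A] [DecidableEq V]
    (tail head : A → V) (mV : V → ℝ) (mA : A → ℝ)
    (hmV : ∀ v, 0 < mV v) (hmA : ∀ a, 0 < mA a)
    (F S : Finset V) (hF : IsSourceF tail head F) (hS : IsSinkF tail head S) :
    (∀ (φ : {v // v ∈ F} → ℂ) (v : {v // v ∈ F}),
      Lplus tail head mV mA (fun u => if h : u ∈ F then φ ⟨u, h⟩ else 0) ↑v =
        (mV (v : V) : ℂ)⁻¹ *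
          ∑ a ∈ (univ : Finset {a : A // tail a ∈ F ∧ head a ∈ F}).filter
              (fun a : {a : A // tail a ∈ F ∧ head a ∈ F} => head a.1 = (v : V)),
            (φ v - φ ⟨tail a.1, a.2.1⟩) * (mA a.1 : ℂ)) ∧
    (∀ (φ : {v // v ∈ S} → ℂ) (v : {v // v ∈ S}),
      Lminus tail head mV mA (fun u => if h : u ∈ S then φ ⟨u, h⟩ else 0) ↑v =
        (mV (v : V) : ℂ)⁻¹ *
          ∑ a ∈ (univ : Finset {a : A // tail a ∈ S ∧ head a ∈ S}).filter
              (fun a : {a : A // tail a ∈ S ∧ head a ∈ S} => tail a.1 = (v : V)),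
            (φ v - φ ⟨head a.1, a.2.2⟩) * (mA a.1 : ℂ)) := by
  constructor
  · intro φ v
    unfold Lplus
    congr 1
    refine (Finset.sum_bij (fun (a : {a : A // tail a ∈ F ∧ head a ∈ F}) _ => a.1)
      ?_ ?_ ?_ ?_).symm
    · intro a ha
      simp only [Finset.mem_filter, Finset.mem_univ, true_and] at ha ⊢
      exact ha
    · intro a ha b hb h
      exact Subtype.ext h
    · intro b hb
      simp only [Finset.mem_filter, Finset.mem_univ, true_and] at hb
      have hh : head b ∈ F := hb ▸ v.2
      exact ⟨⟨b, hF.2.2.2 b hh, hh⟩, by simp [hb], rfl⟩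
    · intro a ha
      simp [dif_pos v.2, dif_pos a.2.1]
  · intro φ v
    unfold Lminus
    congr 1
    refine (Finset.sum_bij (fun (a : {a : A // tail a ∈ S ∧ head a ∈ S}) _ => a.1)
      ?_ ?_ ?_ ?_).symm
    · intro a ha
      simp only [Finset.mem_filter, Finset.mem_univ, true_and] at ha ⊢
      exact ha
    · intro a ha b hb h
      exact Subtype.ext h
    · intro b hb
      simp only [Finset.mem_filter, Finset.mem_univ, true_and] at hb
      have ht : tail b ∈ S := hb ▸ v.2
      exact ⟨⟨b, ht, hS.2.2.2 b ht⟩, by simp [hb], rfl⟩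
    · intro a ha
      simp [dif_pos v.2, dif_pos a.2.2]
end

section
/- Let (G,m) be a finite weighted digraph with sources F_1,…,F_f, sinks S_1,…,S_s (assumed disjoint from the sources), and stream T. Then the spectrum of L^+ (with multiplicities) equals the union of the spectra of the compressions L^+_{F_i} for i = 1,…,f together with the spectrum of L^+_{T ⊔ S}, and the spectrum of L^- equals the union of the spectra of L^-_{S_i} for i = 1,…,s together with the spectrum of L^-_{T ⊔ F}. -/
open Finset Polynomial

variable {V A : Type*}

/-- Matrix of `L⁺` in the coordinate basis. -/
noncomputable def Mplus [Fintype A] [DecidableEq V] (tail head : A → V)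
    (mV : V → ℝ) (mA : A → ℝ) : Matrix V V ℂ :=
  fun v w => Lplus tail head mV mA (fun u => if u = w then 1 else 0) v

/-- Matrix of `L⁻` in the coordinate basis. -/
noncomputable def Mminus [Fintype A] [DecidableEq V] (tail head : A → V)
    (mV : V → ℝ) (mA : A → ℝ) : Matrix V V ℂ :=
  fun v w => Lminus tail head mV mA (fun u => if u = w then 1 else 0) v

/-- Compression (submatrix) of a matrix to a subset of vertices. -/
def compressM (M : Matrix V V ℂ) (W : Finset V) :
    Matrix {v : V // v ∈ W} {v : V // v ∈ W} ℂ :=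
  M.submatrix Subtype.val Subtype.val

/-!
No arc enters a source `F_i`, so the row of `L⁺` at a vertex of `F_i` is supported in `F_i`.
Distinct sources are disjoint strongly connected components, hence listing the vertices as
`T ⊔ S` followed by the sources makes `L⁺` block triangular, and its characteristic polynomial
is the product of those of the diagonal blocks. The out Laplacian of a digraph is the in
Laplacian of the reversed digraph, whose sources are the original sinks.
-/

open Function

section Matrix

variable [DecidableEq V]

lemma charpoly_compressM_univ [Fintype V] (M : Matrix V V ℂ) :
    (compressM M univ).charpoly = M.charpoly := by
  rw [← Matrix.charpoly_reindex (Equiv.subtypeUnivEquiv mem_univ).symm M]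
  rfl

lemma charpoly_compressM_union (M : Matrix V V ℂ) {B C : Finset V} (hBC : Disjoint B C)
    (hrow : ∀ v ∈ B, ∀ w ∈ C, M v w = 0) :
    (compressM M (B ∪ C)).charpoly = (compressM M B).charpoly * (compressM M C).charpoly := by
  have hblocks : Matrix.reindex (Equiv.Finset.union B C hBC).symm
      (Equiv.Finset.union B C hBC).symm (compressM M (B ∪ C)) =
      Matrix.fromBlocks (compressM M B) 0 (M.submatrix Subtype.val Subtype.val)
        (compressM M C) := by
    ext (v | v) (w | w)
    · rfl
    · exact hrow v v.2 w w.2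
    · rfl
    · rfl
  rw [← Matrix.charpoly_reindex (Equiv.Finset.union B C hBC).symm, hblocks,
    Matrix.charpoly_fromBlocks_zero₁₂]

lemma charpoly_compressM_union_biUnion {ι : Type*} (M : Matrix V V ℂ) (R : Finset V)
    (s : Finset ι) (F : ι → Finset V) (hF : (s : Set ι).PairwiseDisjoint F)
    (hR : ∀ i ∈ s, Disjoint (F i) R) (hrow : ∀ i ∈ s, ∀ v ∈ F i, ∀ w ∉ F i, M v w = 0) :
    (compressM M (R ∪ s.biUnion F)).charpoly =
      (compressM M R).charpoly * ∏ i ∈ s, (compressM M (F i)).charpoly := by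
  classical
  induction s using Finset.induction_on with
  | empty => rw [biUnion_empty, union_empty, prod_empty, mul_one]
  | insert i s hi ih =>
    have hFi : Disjoint (F i) (R ∪ s.biUnion F) := by
      refine disjoint_union_right.mpr ⟨hR i (mem_insert_self i s), ?_⟩
      refine (disjoint_biUnion_right _ _ _).mpr fun j hj => hF (by simp) (by simp [hj]) ?_
      rintro rfl
      exact hi hj
    rw [biUnion_insert, union_left_comm, charpoly_compressM_union M hFi
      fun v hv w hw => hrow i (mem_insert_self i s) v hv w (disjoint_right.mp hFi hw),
      ih (hF.subset (by simp)) (fun j hj => hR j (mem_insert_of_mem hj))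
        (fun j hj => hrow j (mem_insert_of_mem hj)), prod_insert hi]
    ring

lemma charpoly_eq_mul_prod_charpoly_compressM [Fintype V] {ι : Type*} [Fintype ι]
    (M : Matrix V V ℂ) (R : Finset V) (F : ι → Finset V) (hF : Pairwise (Disjoint on F))
    (hcover : R ∪ univ.biUnion F = univ) (hR : ∀ i, Disjoint (F i) R)
    (hrow : ∀ i, ∀ v ∈ F i, ∀ w ∉ F i, M v w = 0) :
    M.charpoly = (compressM M R).charpoly * ∏ i, (compressM M (F i)).charpoly := by
  rw [← charpoly_compressM_univ M, ← hcover]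
  exact charpoly_compressM_union_biUnion M R univ F (hF.set_pairwise _) (fun i _ => hR i)
    fun i _ => hrow i

end Matrix

lemma reaches_swap {tail head : A → V} {u v : V} :
    Reaches head tail u v ↔ Reaches tail head v u := by
  have hrel : (fun u v => ∃ a, head a = u ∧ tail a = v) =
      Function.swap (fun u v => ∃ a, tail a = u ∧ head a = v) := by
    ext u v
    simp only [Function.swap, and_comm]
  rw [Reaches, Reaches, hrel, Relation.reflTransGen_swap]

lemma isSourceF_swap_iff {tail head : A → V} {S : Finset V} :
    IsSourceF head tail S ↔ IsSinkF tail head S := by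
  simp only [IsSourceF, IsSinkF, reaches_swap]
  constructor <;> rintro ⟨hne, hconn, hmax, hclosed⟩ <;>
    exact ⟨hne, fun u hu v hv => hconn v hv u hu, fun u hu v h h' => hmax u hu v h' h, hclosed⟩

lemma IsSourceF.eq_of_mem {tail head : A → V} {F F' : Finset V} (hF : IsSourceF tail head F)
    (hF' : IsSourceF tail head F') {u : V} (hu : u ∈ F) (hu' : u ∈ F') : F = F' := by
  ext v
  constructor
  · exact fun hv => hF'.2.2.1 u hu' v (hF.2.1 u hu v hv) (hF.2.1 v hv u hu)
  · exact fun hv => hF.2.2.1 u hu v (hF'.2.1 u hu' v hv) (hF'.2.1 v hv u hu')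

lemma pairwise_disjoint_of_isSourceF {ι : Type*} {tail head : A → V} {F : ι → Finset V}
    (hF : ∀ i, IsSourceF tail head (F i)) (hinj : Function.Injective F) :
    Pairwise (Disjoint on F) := by
  intro i j hij
  rw [Function.onFun, disjoint_left]
  exact fun u hi hj => hij (hinj ((hF i).eq_of_mem (hF j) hi hj))

lemma IsSourceF.Mplus_eq_zero [Fintype A] [DecidableEq V] {tail head : A → V} (mV : V → ℝ)
    (mA : A → ℝ) {F : Finset V} (hF : IsSourceF tail head F) {v w : V} (hv : v ∈ F)
    (hw : w ∉ F) : Mplus tail head mV mA v w = 0 := by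
  refine mul_eq_zero_of_right _ (sum_eq_zero fun a ha => ?_)
  have htail : tail a ∈ F := hF.2.2.2 a ((mem_filter.mp ha).2 ▸ hv)
  simp [show v ≠ w by rintro rfl; exact hw hv, show tail a ≠ w by rintro rfl; exact hw htail]

theorem charpoly_Mplus_eq_mul_prod_sources [Fintype V] [Fintype A] [DecidableEq V]
    {ι : Type*} [Fintype ι] (tail head : A → V) (mV : V → ℝ) (mA : A → ℝ)
    (Fi : ι → Finset V) (S : Finset V) (hFi : ∀ i, IsSourceF tail head (Fi i))
    (hFinj : Function.Injective Fi) (hS : ∀ i, Disjoint (Fi i) S) :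
    (Mplus tail head mV mA).charpoly =
      (compressM (Mplus tail head mV mA) ((univ \ (univ.biUnion Fi ∪ S)) ∪ S)).charpoly *
        ∏ i, (compressM (Mplus tail head mV mA) (Fi i)).charpoly := by
  refine charpoly_eq_mul_prod_charpoly_compressM _ _ Fi
    (pairwise_disjoint_of_isSourceF hFi hFinj) ?_ (fun i => ?_)
    fun i v hv w hw => (hFi i).Mplus_eq_zero mV mA hv hw
  · ext v
    by_cases hv : v ∈ univ.biUnion Fi <;> by_cases hvS : v ∈ S <;> simp_all
  · refine disjoint_union_right.mpr ⟨disjoint_left.mpr fun v hv hv' => ?_, hS i⟩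
    simp only [mem_sdiff, mem_union, mem_biUnion, not_or] at hv'
    exact hv'.2.1 ⟨i, mem_univ i, hv⟩

theorem stmt_12_general [Fintype V] [Fintype A] [DecidableEq V]
    {ι κ : Type*} [Fintype ι] [Fintype κ]
    (tail head : A → V) (mV : V → ℝ) (mA : A → ℝ)
    (Fi : ι → Finset V) (Si : κ → Finset V)
    (hFi : ∀ i, IsSourceF tail head (Fi i)) (hFinj : Function.Injective Fi)
    (hSi : ∀ j, IsSinkF tail head (Si j)) (hSinj : Function.Injective Si)
    (hdisj : ∀ i j, Disjoint (Fi i) (Si j)) :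
    ((Mplus tail head mV mA).charpoly =
      (compressM (Mplus tail head mV mA)
          ((univ \ ((univ : Finset ι).biUnion Fi ∪ (univ : Finset κ).biUnion Si))
            ∪ (univ : Finset κ).biUnion Si)).charpoly *
        ∏ i : ι, (compressM (Mplus tail head mV mA) (Fi i)).charpoly) ∧
    ((Mminus tail head mV mA).charpoly =
      (compressM (Mminus tail head mV mA)
          ((univ \ ((univ : Finset ι).biUnion Fi ∪ (univ : Finset κ).biUnion Si))
            ∪ (univ : Finset ι).biUnion Fi)).charpoly *
        ∏ j : κ, (compressM (Mminus tail head mV mA) (Si j)).charpoly) := by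
  refine ⟨charpoly_Mplus_eq_mul_prod_sources tail head mV mA Fi _ hFi hFinj
    fun i => (disjoint_biUnion_right _ _ _).mpr fun j _ => hdisj i j, ?_⟩
  -- `L⁻` is `L⁺` of the reversed digraph, whose sources are the sinks of the original one.
  rw [union_comm (univ.biUnion Fi)]
  exact charpoly_Mplus_eq_mul_prod_sources head tail mV mA Si _
    (fun j => isSourceF_swap_iff.mpr (hSi j)) hSinj
    fun j => (disjoint_biUnion_right _ _ _).mpr fun i _ => (hdisj i j).symm

/-- Decomposition of the spectrum (with multiplicities, expressed via characteristic
polynomials): for the in Laplacian, the spectrum of `L⁺` is the union of the spectra of its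
compressions to the sources `F_i` together with the spectrum of its compression to `T ⊔ S`;
analogously for the out Laplacian with sinks `S_j` and `T ⊔ F`. -/
theorem stmt_12 [Fintype V] [Fintype A] [DecidableEq V]
    {ι κ : Type*} [Fintype ι] [DecidableEq ι] [Fintype κ] [DecidableEq κ]
    (tail head : A → V) (mV : V → ℝ) (mA : A → ℝ)
    (hmV : ∀ v, 0 < mV v) (hmA : ∀ a, 0 < mA a)
    (Fi : ι → Finset V) (Si : κ → Finset V)
    (hFi : ∀ i, IsSourceF tail head (Fi i)) (hFinj : Function.Injective Fi)
    (hFall : ∀ F, IsSourceF tail head F → ∃ i, F = Fi i)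
    (hSi : ∀ j, IsSinkF tail head (Si j)) (hSinj : Function.Injective Si)
    (hSall : ∀ S, IsSinkF tail head S → ∃ j, S = Si j)
    (hdisj : ∀ i j, Disjoint (Fi i) (Si j)) :
    ((Mplus tail head mV mA).charpoly =
      (compressM (Mplus tail head mV mA)
          ((univ \ ((univ : Finset ι).biUnion Fi ∪ (univ : Finset κ).biUnion Si))
            ∪ (univ : Finset κ).biUnion Si)).charpoly *
        ∏ i : ι, (compressM (Mplus tail head mV mA) (Fi i)).charpoly) ∧
    ((Mminus tail head mV mA).charpoly =
      (compressM (Mminus tail head mV mA)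
          ((univ \ ((univ : Finset ι).biUnion Fi ∪ (univ : Finset κ).biUnion Si))
            ∪ (univ : Finset ι).biUnion Fi)).charpoly *
        ∏ j : κ, (compressM (Mminus tail head mV mA) (Si j)).charpoly) :=
  stmt_12_general tail head mV mA Fi Si hFi hFinj hSi hSinj hdisj
end

section
/- A finite weighted digraph has exactly one directed component (equivalently, exactly one source and exactly one sink) if and only if 0 is a simple eigenvalue of both L^+ and L^-. -/
open Finset Polynomial

variable {V A : Type*}

set_option linter.unusedSectionVars false
namespace Stmt16

lemma mem_of_reaches {tail head : A → V} {S : Finset V}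
    (hS : ∀ a, tail a ∈ S → head a ∈ S) {u v : V}
    (h : Reaches tail head u v) (hu : u ∈ S) : v ∈ S := by
  induction h with
  | refl => exact hu
  | tail _ hstep ih =>
    obtain ⟨a, ha1, ha2⟩ := hstep
    exact ha2 ▸ hS a (ha1 ▸ ih)

lemma reaches_rev {tail head : A → V} {u v : V} (h : Reaches tail head u v) :
    Reaches head tail v u := by
  induction h with
  | refl => exact Relation.ReflTransGen.refl
  | tail _ hstep ih =>
    obtain ⟨a, ha1, ha2⟩ := hstep
    exact Relation.ReflTransGen.head ⟨a, ha2, ha1⟩ ih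

lemma reaches_comm {tail head : A → V} {u v : V} :
    Reaches tail head u v ↔ Reaches head tail v u :=
  ⟨reaches_rev, reaches_rev⟩

lemma exists_sink_reaches [Fintype V] (tail head : A → V) (w : V) :
    ∃ S : Finset V, IsSinkF tail head S ∧ ∀ s ∈ S, Reaches tail head w s := by
  classical
  set R : V → Finset V := fun u => univ.filter (fun x => Reaches tail head u x) with hR
  have hmemR : ∀ u x, x ∈ R u ↔ Reaches tail head u x := by
    intro u x; simp [hR]
  obtain ⟨u, hu, hmin⟩ := (R w).exists_min_image (fun x => (R x).card)
    ⟨w, (hmemR w w).2 Relation.ReflTransGen.refl⟩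
  have huw : Reaches tail head w u := (hmemR w u).1 hu
  -- key: if u reaches x then x reaches u
  have hback : ∀ x, Reaches tail head u x → Reaches tail head x u := by
    intro x hux
    have hsub : R x ⊆ R u := by
      intro y hy
      exact (hmemR u y).2 (hux.trans ((hmemR x y).1 hy))
    have hxRw : x ∈ R w := (hmemR w x).2 (huw.trans hux)
    have hcard : (R u).card ≤ (R x).card := hmin x hxRw
    have : R x = R u := Finset.eq_of_subset_of_card_le hsub hcard
    have : u ∈ R x := this ▸ ((hmemR u u).2 Relation.ReflTransGen.refl)
    exact (hmemR x u).1 this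
  refine ⟨univ.filter (fun x => Reaches tail head u x ∧ Reaches tail head x u), ⟨?_, ?_, ?_, ?_⟩, ?_⟩
  · exact ⟨u, by simp only [mem_filter]; exact ⟨mem_univ u, .refl, .refl⟩⟩
  · intro x hx y hy
    simp only [mem_filter] at hx hy
    exact hx.2.2.trans hy.2.1
  · intro x hx y hxy hyx
    simp only [mem_filter] at hx ⊢
    exact ⟨mem_univ y, hx.2.1.trans hxy, hyx.trans hx.2.2⟩
  · intro a ha
    simp only [mem_filter] at ha ⊢
    have hstep : Reaches tail head (tail a) (head a) :=
      Relation.ReflTransGen.single ⟨a, rfl, rfl⟩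
    have huh : Reaches tail head u (head a) := ha.2.1.trans hstep
    exact ⟨mem_univ _, huh, hback _ huh⟩
  · intro s hs
    simp only [mem_filter] at hs
    exact huw.trans hs.2.1

lemma global_iff_unique_sink [Fintype V] (tail head : A → V) :
    (∃ v, ∀ w, Reaches tail head w v) ↔ (∃! S : Finset V, IsSinkF tail head S) := by
  classical
  constructor
  · rintro ⟨v, hv⟩
    refine ⟨univ.filter (fun x => Reaches tail head v x ∧ Reaches tail head x v), ⟨⟨v, by
      simp only [mem_filter]; exact ⟨mem_univ v, .refl, .refl⟩⟩, ?_, ?_, ?_⟩, ?_⟩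
    · intro x hx y hy
      simp only [mem_filter] at hx hy
      exact hx.2.2.trans hy.2.1
    · intro x hx y hxy hyx
      simp only [mem_filter] at hx ⊢
      exact ⟨mem_univ y, hx.2.1.trans hxy, hyx.trans hx.2.2⟩
    · intro a ha
      simp only [mem_filter] at ha ⊢
      have hstep : Reaches tail head (tail a) (head a) :=
        Relation.ReflTransGen.single ⟨a, rfl, rfl⟩
      exact ⟨mem_univ _, ha.2.1.trans hstep, hv _⟩
    · rintro S ⟨⟨s, hs⟩, hmut, hscc, hclosed⟩
      have hvS : v ∈ S := mem_of_reaches hclosed (hv s) hs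
      ext x
      simp only [mem_filter]
      constructor
      · intro hx
        exact ⟨mem_univ x, hmut v hvS x hx, hmut x hx v hvS⟩
      · intro hx
        exact hscc v hvS x hx.2.1 hx.2.2
  · rintro ⟨S, hS, huniq⟩
    obtain ⟨v, hv⟩ := hS.1
    refine ⟨v, fun w => ?_⟩
    obtain ⟨S', hS', hreach⟩ := exists_sink_reaches tail head w
    have : S' = S := huniq S' hS'
    exact hreach v (this ▸ hv)


variable [Fintype V] [Fintype A] [DecidableEq V]

noncomputable def Nmat (tail head : A → V) (mV : V → ℝ) (mA : A → ℝ) : Matrix V V ℝ :=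
  fun v w => (mV v)⁻¹ * ∑ a ∈ univ.filter (fun a => tail a = v),
    ((if v = w then 1 else 0) - (if head a = w then 1 else 0)) * mA a

lemma Mminus_eq_map (tail head : A → V) (mV : V → ℝ) (mA : A → ℝ) :
    Mminus tail head mV mA = (Nmat tail head mV mA).map Complex.ofRealHom := by
  ext v w
  simp only [Mminus, Lminus, Nmat, Matrix.map_apply, Complex.ofRealHom_eq_coe]
  push_cast [apply_ite ((↑) : ℝ → ℂ)]
  norm_num

lemma mulVec_Nmat (tail head : A → V) (mV : V → ℝ) (mA : A → ℝ) (φ : V → ℝ) (v : V) :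
    (Nmat tail head mV mA).mulVec φ v
      = (mV v)⁻¹ * ∑ a ∈ univ.filter (fun a => tail a = v), (φ v - φ (head a)) * mA a := by
  simp only [Matrix.mulVec, dotProduct, Nmat]
  have : ∀ w, (mV v)⁻¹ * (∑ a ∈ univ.filter (fun a => tail a = v),
      ((if v = w then 1 else 0) - (if head a = w then 1 else 0)) * mA a) * φ w
      = (mV v)⁻¹ * (∑ a ∈ univ.filter (fun a => tail a = v),
      ((if v = w then 1 else 0) - (if head a = w then 1 else 0)) * mA a * φ w) := by
    intro w; rw [mul_assoc, Finset.sum_mul]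
  simp only [this]
  rw [← Finset.mul_sum, Finset.sum_comm]
  congr 1
  refine Finset.sum_congr rfl fun a _ => ?_
  have h1 : ∑ w, ((if v = w then 1 else 0) - (if head a = w then 1 else 0)) * mA a * φ w
      = (∑ w, (if v = w then 1 else 0) * (mA a * φ w))
        - ∑ w, (if head a = w then 1 else 0) * (mA a * φ w) := by
    rw [← Finset.sum_sub_distrib]
    refine Finset.sum_congr rfl fun w _ => by ring
  rw [h1]
  simp only [ite_mul, one_mul, zero_mul, Finset.sum_ite_eq, mem_univ, if_true]
  ring

lemma rowsum_Nmat (tail head : A → V) (mV : V → ℝ) (mA : A → ℝ) (v : V) :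
    ∑ w, Nmat tail head mV mA v w = 0 := by
  have := mulVec_Nmat tail head mV mA (fun _ => 1) v
  simp only [Matrix.mulVec, dotProduct, mul_one, sub_self, zero_mul,
    Finset.sum_const_zero, mul_zero] at this
  exact this

lemma Nmat_eq_zero_of_closed {tail head : A → V} (mV : V → ℝ) (mA : A → ℝ)
    {S : Finset V} (hS : ∀ a, tail a ∈ S → head a ∈ S) {v w : V}
    (hv : v ∈ S) (hw : w ∉ S) : Nmat tail head mV mA v w = 0 := by
  simp only [Nmat]
  rw [Finset.sum_eq_zero, mul_zero]
  intro a ha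
  simp only [mem_filter] at ha
  have h1 : v ≠ w := fun h => hw (h ▸ hv)
  have h2 : head a ≠ w := fun h => hw (h ▸ hS a (ha.2 ▸ hv))
  simp [h1, h2]

lemma sum_split_v0 (v₀ : V) (f : V → ℝ) :
    ∑ x, f x = f v₀ + ∑ x : {w : V // w ≠ v₀}, f x.1 := by
  rw [← Finset.add_sum_erase univ f (mem_univ v₀)]
  congr 1
  exact Finset.sum_subtype _ (by simp) f

lemma reach_eq_max {tail head : A → V} {mV : V → ℝ} {mA : A → ℝ}
    (hmV : ∀ v, 0 < mV v) (hmA : ∀ a, 0 < mA a) {φ : V → ℝ} {M : ℝ}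
    (hharm : ∀ u, (Nmat tail head mV mA).mulVec φ u = 0)
    (hle : ∀ x, φ x ≤ M) {u v : V} (h : Reaches tail head u v) (hu : φ u = M) :
    φ v = M := by
  induction h with
  | refl => exact hu
  | @tail b c hreach hstep ih =>
    obtain ⟨a, ha1, ha2⟩ := hstep
    have hb : φ b = M := ih
    have h0 : ∑ a ∈ univ.filter (fun a => tail a = b), (φ b - φ (head a)) * mA a = 0 := by
      have := hharm b
      rw [mulVec_Nmat] at this
      have hpos : (0:ℝ) < (mV b)⁻¹ := inv_pos.2 (hmV b)
      rcases mul_eq_zero.1 this with h | h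
      · exact absurd h (ne_of_gt hpos)
      · exact h
    have hz := (Finset.sum_eq_zero_iff_of_nonneg ?_).1 h0 a (by simp [ha1])
    · have hma := hmA a
      have : φ b - φ (head a) = 0 := by
        rcases mul_eq_zero.1 hz with h | h
        · exact h
        · exact absurd h (ne_of_gt hma)
      rw [ha2] at this
      linarith
    · intro a' ha'
      simp only [mem_filter] at ha'
      have : φ (head a') ≤ φ b := hb ▸ hle (head a')
      have : 0 ≤ φ b - φ (head a') := by linarith
      exact mul_nonneg this (le_of_lt (hmA a'))

lemma harmonic_const {tail head : A → V} {mV : V → ℝ} {mA : A → ℝ}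
    (hmV : ∀ v, 0 < mV v) (hmA : ∀ a, 0 < mA a) {φ : V → ℝ} {c : ℝ} {v : V}
    (hglob : ∀ w, Reaches tail head w v)
    (hharm : ∀ u, (Nmat tail head mV mA).mulVec φ u = c) : ∀ w, φ w = φ v := by
  have hne : Nonempty V := ⟨v⟩
  obtain ⟨u1, _, hmax⟩ := univ.exists_max_image φ univ_nonempty
  obtain ⟨u2, _, hmin⟩ := univ.exists_min_image φ univ_nonempty
  have hc0 : c = 0 := by
    have h1 : 0 ≤ c := by
      have := hharm u1
      rw [mulVec_Nmat] at this
      rw [← this]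
      refine mul_nonneg (le_of_lt (inv_pos.2 (hmV u1))) (Finset.sum_nonneg ?_)
      intro a _
      exact mul_nonneg (by linarith [hmax (head a) (mem_univ _)]) (le_of_lt (hmA a))
    have h2 : c ≤ 0 := by
      have := hharm u2
      rw [mulVec_Nmat] at this
      rw [← this]
      refine mul_nonpos_of_nonneg_of_nonpos (le_of_lt (inv_pos.2 (hmV u2))) (Finset.sum_nonpos ?_)
      intro a _
      exact mul_nonpos_of_nonpos_of_nonneg (by linarith [hmin (head a) (mem_univ _)])
        (le_of_lt (hmA a))
    linarith
  have hharm0 : ∀ u, (Nmat tail head mV mA).mulVec φ u = 0 := by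
    intro u; rw [hharm u, hc0]
  have hvmax : φ v = φ u1 :=
    reach_eq_max hmV hmA hharm0 (fun x => hmax x (mem_univ x)) (hglob u1) rfl
  have hharm0' : ∀ u, (Nmat tail head mV mA).mulVec (-φ) u = 0 := by
    intro u; rw [Matrix.mulVec_neg]; simp [hharm0 u]
  have hvmin : (-φ) v = (-φ) u2 :=
    reach_eq_max hmV hmA hharm0' (fun x => neg_le_neg (hmin x (mem_univ x))) (hglob u2) rfl
  intro w
  have h1 : φ w ≤ φ u1 := hmax w (mem_univ w)
  have h2 : φ u2 ≤ φ w := hmin w (mem_univ w)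
  have h3 : φ v = φ u2 := by simpa using hvmin
  linarith [hvmax]

noncomputable def Bmat (tail head : A → V) (mV : V → ℝ) (mA : A → ℝ) (v₀ : V) :
    Matrix {w : V // w ≠ v₀} {w : V // w ≠ v₀} ℝ :=
  fun w u => Nmat tail head mV mA w.1 u.1 - Nmat tail head mV mA v₀ u.1

lemma detB_ne_zero_of_global {tail head : A → V} {mV : V → ℝ} {mA : A → ℝ}
    (hmV : ∀ v, 0 < mV v) (hmA : ∀ a, 0 < mA a) (v₀ : V)
    (hglob : ∃ v, ∀ w, Reaches tail head w v) :
    (Bmat tail head mV mA v₀).det ≠ 0 := by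
  classical
  obtain ⟨v, hv⟩ := hglob
  intro hdet
  obtain ⟨x, hx0, hxker⟩ := (Matrix.exists_mulVec_eq_zero_iff).2 hdet
  set φ : V → ℝ := fun w => if h : w = v₀ then 0 else x ⟨w, h⟩ with hφ
  have hφv₀ : φ v₀ = 0 := by simp [hφ]
  have hφx : ∀ u : {w : V // w ≠ v₀}, φ u.1 = x u := by
    intro u; simp only [hφ, dif_neg u.2]
  have hsum : ∀ i : V, (∑ u : {w : V // w ≠ v₀}, Nmat tail head mV mA i u.1 * x u)
      = (Nmat tail head mV mA).mulVec φ i := by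
    intro i
    have : ∀ u : {w : V // w ≠ v₀}, Nmat tail head mV mA i u.1 * x u
        = Nmat tail head mV mA i u.1 * φ u.1 := fun u => by rw [hφx]
    rw [Finset.sum_congr rfl (fun u _ => this u)]
    show _ = ∑ j, Nmat tail head mV mA i j * φ j
    rw [sum_split_v0 v₀ (fun j => Nmat tail head mV mA i j * φ j), hφv₀, mul_zero, zero_add]
  have hharm : ∀ w : V, (Nmat tail head mV mA).mulVec φ w
      = (Nmat tail head mV mA).mulVec φ v₀ := by
    intro w
    by_cases hw : w = v₀
    · rw [hw]
    · have hBx := congrFun hxker ⟨w, hw⟩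
      simp only [Matrix.mulVec, dotProduct, Bmat, Pi.zero_apply] at hBx
      have : ∑ u : {w : V // w ≠ v₀},
          (Nmat tail head mV mA w u.1 * x u - Nmat tail head mV mA v₀ u.1 * x u) = 0 := by
        rw [← hBx]
        exact Finset.sum_congr rfl fun u _ => by ring
      rw [Finset.sum_sub_distrib] at this
      rw [hsum w, hsum v₀] at this
      linarith
  have hconst := harmonic_const hmV hmA hv hharm
  have hφ0 : ∀ w, φ w = 0 := by
    intro w
    rw [hconst w, ← hφv₀, hconst v₀]
  apply hx0
  funext u
  have := hφ0 u.1
  rw [hφx] at this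
  exact this

lemma exists_left_kernel_of_closed (tail head : A → V) (mV : V → ℝ) (mA : A → ℝ)
    {S : Finset V} (hSne : S.Nonempty) (hcl : ∀ a, tail a ∈ S → head a ∈ S) :
    ∃ lam : V → ℝ, lam ≠ 0 ∧ (∀ w, w ∉ S → lam w = 0)
      ∧ Matrix.vecMul lam (Nmat tail head mV mA) = 0 := by
  classical
  set NSS : Matrix {x : V // x ∈ S} {x : V // x ∈ S} ℝ :=
    fun i j => Nmat tail head mV mA i.1 j.1 with hNSS
  have hdet : NSS.det = 0 := by
    rw [← Matrix.exists_mulVec_eq_zero_iff]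
    refine ⟨fun _ => 1, ?_, ?_⟩
    · obtain ⟨s, hs⟩ := hSne
      intro h0
      have := congrFun h0 ⟨s, hs⟩
      norm_num at this
    · funext i
      show ∑ j : {x : V // x ∈ S}, NSS i j * 1 = 0
      simp only [mul_one]
      have h1 : ∑ j : {x : V // x ∈ S}, NSS i j = ∑ j ∈ S, Nmat tail head mV mA i.1 j := by
        exact (Finset.sum_subtype S (fun x => Iff.rfl) (fun j => Nmat tail head mV mA i.1 j)).symm
      have h2 : ∑ j ∈ S, Nmat tail head mV mA i.1 j = ∑ j, Nmat tail head mV mA i.1 j := by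
        refine Finset.sum_subset (Finset.subset_univ S) ?_
        intro j _ hj
        exact Nmat_eq_zero_of_closed mV mA hcl i.2 hj
      rw [h1, h2, rowsum_Nmat]
  have hdetT : (NSS.transpose).det = 0 := by rw [Matrix.det_transpose]; exact hdet
  obtain ⟨y, hy0, hyker⟩ := (Matrix.exists_mulVec_eq_zero_iff).2 hdetT
  have hyker' : Matrix.vecMul y NSS = 0 := by rw [← Matrix.mulVec_transpose]; exact hyker
  refine ⟨fun w => if h : w ∈ S then y ⟨w, h⟩ else 0, ?_, ?_, ?_⟩
  · intro h0
    apply hy0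
    funext i
    have := congrFun h0 i.1
    simpa [dif_pos i.2] using this
  · intro w hw; simp [dif_neg hw]
  · funext c
    show ∑ w, (if h : w ∈ S then y ⟨w, h⟩ else 0) * Nmat tail head mV mA w c = 0
    have h1 : ∑ w, (if h : w ∈ S then y ⟨w, h⟩ else 0) * Nmat tail head mV mA w c
        = ∑ w ∈ S, (if h : w ∈ S then y ⟨w, h⟩ else 0) * Nmat tail head mV mA w c := by
      symm
      refine Finset.sum_subset (Finset.subset_univ S) ?_
      intro w _ hw
      simp [dif_neg hw]
    rw [h1, Finset.sum_subtype S (fun x => Iff.rfl)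
      (fun w => (if h : w ∈ S then y ⟨w, h⟩ else 0) * Nmat tail head mV mA w c)]
    by_cases hc : c ∈ S
    · have := congrFun hyker' ⟨c, hc⟩
      simp only [Matrix.vecMul, dotProduct, Pi.zero_apply] at this
      rw [← this]
      refine Finset.sum_congr rfl fun w _ => ?_
      simp [dif_pos w.2, hNSS]
    · refine Finset.sum_eq_zero fun w _ => ?_
      rw [Nmat_eq_zero_of_closed mV mA hcl w.2 hc, mul_zero]

lemma exists_offdiag_nonzero {lam : V → ℝ} (v₀ : V) (hlam : lam ≠ 0)
    (hsum : ∑ w, lam w = 0) : ∃ w, w ≠ v₀ ∧ lam w ≠ 0 := by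
  by_contra h
  push_neg at h
  apply hlam
  have hv₀ : lam v₀ = 0 := by
    have : ∑ w, lam w = lam v₀ := by
      refine Finset.sum_eq_single v₀ (fun w _ hw => h w hw) (fun h' => absurd (mem_univ v₀) h')
    rw [this] at hsum; exact hsum
  funext w
  by_cases hw : w = v₀
  · rw [hw]; exact hv₀
  · exact h w hw

lemma detB_eq_zero_of_two_sinks {tail head : A → V} (mV : V → ℝ) (mA : A → ℝ) (v₀ : V)
    {S₁ S₂ : Finset V} (h₁ : IsSinkF tail head S₁) (h₂ : IsSinkF tail head S₂)
    (hdisj : ∀ x, x ∈ S₁ → x ∉ S₂) :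
    (Bmat tail head mV mA v₀).det = 0 := by
  classical
  obtain ⟨lam₁, hl₁0, hl₁supp, hl₁ker⟩ :=
    exists_left_kernel_of_closed tail head mV mA h₁.1 h₁.2.2.2
  obtain ⟨lam₂, hl₂0, hl₂supp, hl₂ker⟩ :=
    exists_left_kernel_of_closed tail head mV mA h₂.1 h₂.2.2.2
  -- build lam with vecMul lam N = 0, sum lam = 0, lam nonzero off v₀
  obtain ⟨lam, hlker, hlsum, hlnz⟩ : ∃ lam : V → ℝ,
      Matrix.vecMul lam (Nmat tail head mV mA) = 0 ∧ (∑ w, lam w = 0)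
        ∧ ∃ w, w ≠ v₀ ∧ lam w ≠ 0 := by
    by_cases hs₁ : ∑ w, lam₁ w = 0
    · exact ⟨lam₁, hl₁ker, hs₁, exists_offdiag_nonzero v₀ hl₁0 hs₁⟩
    · set lam : V → ℝ := (∑ w, lam₂ w) • lam₁ - (∑ w, lam₁ w) • lam₂ with hlam
      have hker : Matrix.vecMul lam (Nmat tail head mV mA) = 0 := by
        rw [hlam, Matrix.sub_vecMul, Matrix.smul_vecMul, Matrix.smul_vecMul, hl₁ker, hl₂ker]
        simp
      have hsum : ∑ w, lam w = 0 := by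
        simp only [hlam, Pi.sub_apply, Pi.smul_apply, smul_eq_mul]
        rw [Finset.sum_sub_distrib, ← Finset.mul_sum, ← Finset.mul_sum]
        ring
      have hlne : lam ≠ 0 := by
        obtain ⟨w₂, hw₂⟩ : ∃ w, lam₂ w ≠ 0 := by
          by_contra h; push_neg at h; exact hl₂0 (funext h)
        have hw₂S₂ : w₂ ∈ S₂ := by
          by_contra h; exact hw₂ (hl₂supp w₂ h)
        have hw₂S₁ : w₂ ∉ S₁ := fun h => hdisj w₂ h hw₂S₂
        intro h0
        have := congrFun h0 w₂
        simp only [hlam, Pi.sub_apply, Pi.smul_apply, smul_eq_mul, Pi.zero_apply] at this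
        rw [hl₁supp w₂ hw₂S₁, mul_zero] at this
        have : (∑ w, lam₁ w) * lam₂ w₂ = 0 := by linarith
        rcases mul_eq_zero.1 this with h | h
        · exact hs₁ h
        · exact hw₂ h
      exact ⟨lam, hker, hsum, exists_offdiag_nonzero v₀ hlne hsum⟩
  -- now transfer to B
  rw [← Matrix.det_transpose]
  rw [← Matrix.exists_mulVec_eq_zero_iff]
  obtain ⟨w₁, hw₁v₀, hw₁⟩ := hlnz
  refine ⟨fun w => lam w.1, ?_, ?_⟩
  · intro h0
    exact hw₁ (congrFun h0 ⟨w₁, hw₁v₀⟩)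
  · rw [Matrix.mulVec_transpose]
    funext u
    show ∑ w : {w : V // w ≠ v₀}, lam w.1 * Bmat tail head mV mA v₀ w u = 0
    have hsub : ∑ w : {w : V // w ≠ v₀}, lam w.1 = - lam v₀ := by
      have := sum_split_v0 v₀ lam
      rw [hlsum] at this
      linarith
    have hNcol : ∑ w : {w : V // w ≠ v₀}, lam w.1 * Nmat tail head mV mA w.1 u.1
        = - (lam v₀ * Nmat tail head mV mA v₀ u.1) := by
      have hcol := congrFun hlker u.1
      simp only [Matrix.vecMul, dotProduct, Pi.zero_apply] at hcol
      have := sum_split_v0 v₀ (fun w => lam w * Nmat tail head mV mA w u.1)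
      rw [hcol] at this
      linarith
    have : ∑ w : {w : V // w ≠ v₀}, lam w.1 * Bmat tail head mV mA v₀ w u
        = (∑ w : {w : V // w ≠ v₀}, lam w.1 * Nmat tail head mV mA w.1 u.1)
          - (∑ w : {w : V // w ≠ v₀}, lam w.1) * Nmat tail head mV mA v₀ u.1 := by
      rw [Finset.sum_mul, ← Finset.sum_sub_distrib]
      refine Finset.sum_congr rfl fun w _ => ?_
      simp only [Bmat]
      ring
    rw [this, hNcol, hsub]
    ring

lemma charpoly_conj {P Q N : Matrix V V ℝ} (hPQ : P * Q = 1) (hQP : Q * P = 1) :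
    (Q * N * P).charpoly = N.charpoly := by
  have hQP' : Q.map (C : ℝ →+* ℝ[X]) * P.map (C : ℝ →+* ℝ[X]) = 1 := by
    rw [← Matrix.map_mul, hQP, Matrix.map_one _ (map_zero C) (map_one C)]
  have hchar : Matrix.charmatrix (Q * N * P)
      = Q.map (C : ℝ →+* ℝ[X]) * Matrix.charmatrix N * P.map (C : ℝ →+* ℝ[X]) := by
    symm
    calc Q.map (C : ℝ →+* ℝ[X]) * Matrix.charmatrix N * P.map (C : ℝ →+* ℝ[X])
        = Q.map (C : ℝ →+* ℝ[X]) * Matrix.scalar V (X : ℝ[X]) * P.map (C : ℝ →+* ℝ[X])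
          - Q.map (C : ℝ →+* ℝ[X]) * N.map (C : ℝ →+* ℝ[X]) * P.map (C : ℝ →+* ℝ[X]) := by
          rw [Matrix.charmatrix, mul_sub, sub_mul]
          rfl
      _ = Matrix.scalar V (X : ℝ[X]) - (Q * N * P).map (C : ℝ →+* ℝ[X]) := by
          congr 1
          · rw [← (Matrix.scalar_commute (X : ℝ[X]) (fun r' => Commute.all _ _) (Q.map C)).eq,
              mul_assoc, hQP', mul_one]
          · rw [Matrix.map_mul, Matrix.map_mul]
      _ = Matrix.charmatrix (Q * N * P) := rfl
  rw [Matrix.charpoly, hchar, Matrix.det_mul, Matrix.det_mul]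
  have : (Q.map (C : ℝ →+* ℝ[X])).det * (Matrix.charmatrix N).det * (P.map (C : ℝ →+* ℝ[X])).det
      = ((Q.map (C : ℝ →+* ℝ[X])).det * (P.map (C : ℝ →+* ℝ[X])).det)
          * (Matrix.charmatrix N).det := by ring
  rw [this, ← Matrix.det_mul, hQP', Matrix.det_one, one_mul]
  rfl

lemma charpoly_factor (tail head : A → V) (mV : V → ℝ) (mA : A → ℝ) (v₀ : V) :
    (Nmat tail head mV mA).charpoly = X * (Bmat tail head mV mA v₀).charpoly := by
  classical
  set N := Nmat tail head mV mA with hN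
  set E : Matrix V V ℝ :=
    Matrix.of (fun i k => (if i = v₀ then 0 else 1) * (if k = v₀ then 1 else 0)) with hE
  have hEapp : ∀ i k, E i k = (if i = v₀ then 0 else 1) * (if k = v₀ then 1 else 0) :=
    fun i k => rfl
  have hE2 : E * E = 0 := by
    ext i j
    simp only [Matrix.mul_apply, Matrix.zero_apply]
    refine Finset.sum_eq_zero fun k _ => ?_
    rw [hEapp, hEapp]
    by_cases hk : k = v₀ <;> simp [hk]
  set P := (1 : Matrix V V ℝ) + E with hP
  set Q := (1 : Matrix V V ℝ) - E with hQ
  have hPQ : P * Q = 1 := by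
    rw [hP, hQ, mul_sub, mul_one, add_mul, one_mul, hE2]
    abel
  have hQP : Q * P = 1 := by
    rw [hP, hQ, sub_mul, one_mul, mul_add, mul_one, hE2]
    abel
  set Amat := Q * N * P with hA
  have hAcol : ∀ i, Amat i v₀ = 0 := by
    intro i
    rw [hA, Matrix.mul_apply]
    have hPcol : ∀ j, P j v₀ = 1 := by
      intro j
      rw [hP]
      simp only [Matrix.add_apply, Matrix.one_apply, hEapp]
      by_cases hj : j = v₀ <;> simp [hj]
    simp only [hPcol, mul_one]
    have : ∀ j, (Q * N) i j = ∑ k, Q i k * N k j := fun j => Matrix.mul_apply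
    simp only [this]
    rw [Finset.sum_comm]
    refine Finset.sum_eq_zero fun k _ => ?_
    rw [← Finset.mul_sum, rowsum_Nmat, mul_zero]
  have hAblock : ∀ w u : {x : V // x ≠ v₀}, Amat w.1 u.1 = Bmat tail head mV mA v₀ w u := by
    intro w u
    rw [hA, Matrix.mul_apply]
    have hPcol : ∀ j, P j u.1 = if j = u.1 then 1 else 0 := by
      intro j
      rw [hP]
      simp only [Matrix.add_apply, Matrix.one_apply, hEapp]
      have : (if (u : V) = v₀ then (1:ℝ) else 0) = 0 := by simp [u.2]
      rw [this, mul_zero, add_zero]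
    simp only [hPcol, mul_ite, mul_one, mul_zero]
    rw [Finset.sum_ite_eq' univ u.1 (fun j => (Q * N) w.1 j), if_pos (mem_univ _)]
    rw [Matrix.mul_apply]
    have hQrow : ∀ k, Q w.1 k = (if w.1 = k then 1 else 0) - (if k = v₀ then 1 else 0) := by
      intro k
      rw [hQ]
      simp only [Matrix.sub_apply, Matrix.one_apply, hEapp]
      simp [w.2]
    simp only [hQrow, sub_mul, ite_mul, one_mul, zero_mul]
    rw [Finset.sum_sub_distrib]
    rw [Finset.sum_ite_eq univ w.1 (fun k => N k u.1), if_pos (mem_univ _)]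
    rw [Finset.sum_ite_eq' univ v₀ (fun k => N k u.1), if_pos (mem_univ _)]
    rfl
  have hconj : N.charpoly = Amat.charpoly := (charpoly_conj hPQ hQP).symm
  haveI : Unique {w : V // w = v₀} := ⟨⟨⟨v₀, rfl⟩⟩, fun x => Subtype.ext x.2⟩
  set e : {w : V // w = v₀} ⊕ {w : V // ¬ w = v₀} ≃ V := Equiv.sumCompl (· = v₀) with he
  have hreindex : (Matrix.reindex e.symm e.symm Amat).charpoly = Amat.charpoly :=
    Matrix.charpoly_reindex e.symm Amat
  have hblocks : Matrix.reindex e.symm e.symm Amat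
      = Matrix.fromBlocks 0 (Matrix.of fun (i : {w : V // w = v₀}) (j : {w : V // ¬ w = v₀}) =>
          Amat i.1 j.1) 0 (Bmat tail head mV mA v₀) := by
    ext i j
    cases i with
    | inl i =>
      cases j with
      | inl j =>
        simp only [Matrix.reindex_apply, Matrix.submatrix_apply, Equiv.symm_symm,
          Matrix.fromBlocks_apply₁₁, Matrix.zero_apply, he, Equiv.sumCompl_apply_inl]
        rw [show (j : V) = v₀ from j.2]
        exact hAcol i.1
      | inr j =>
        simp [Matrix.reindex_apply, Matrix.submatrix_apply, he]
    | inr i =>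
      cases j with
      | inl j =>
        simp only [Matrix.reindex_apply, Matrix.submatrix_apply, Equiv.symm_symm,
          Matrix.fromBlocks_apply₂₁, Matrix.zero_apply, he, Equiv.sumCompl_apply_inl,
          Equiv.sumCompl_apply_inr]
        rw [show (j : V) = v₀ from j.2]
        exact hAcol i.1
      | inr j =>
        simp only [Matrix.reindex_apply, Matrix.submatrix_apply, Equiv.symm_symm,
          Matrix.fromBlocks_apply₂₂, he, Equiv.sumCompl_apply_inr]
        exact hAblock i j
  have hzero_charpoly : (0 : Matrix {w : V // w = v₀} {w : V // w = v₀} ℝ).charpoly = X := by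
    rw [Matrix.charpoly, Matrix.det_unique]
    simp
  rw [hconj, ← hreindex, hblocks, Matrix.charpoly_fromBlocks_zero₂₁, hzero_charpoly]

lemma real_main (tail head : A → V) {mV : V → ℝ} {mA : A → ℝ}
    (hmV : ∀ v, 0 < mV v) (hmA : ∀ a, 0 < mA a) :
    (∃! S : Finset V, IsSinkF tail head S) ↔
      (Nmat tail head mV mA).charpoly.rootMultiplicity 0 = 1 := by
  classical
  rcases isEmpty_or_nonempty V with hV | hV
  · constructor
    · rintro ⟨S, hS, -⟩
      obtain ⟨s, -⟩ := hS.1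
      exact (hV.false s).elim
    · intro h
      exfalso
      have h1 : (Nmat tail head mV mA).charpoly = 1 := by
        rw [Matrix.charpoly, Matrix.det_isEmpty]
      rw [h1] at h
      have h2 : Polynomial.rootMultiplicity 0 (1 : ℝ[X]) = 0 :=
        Polynomial.rootMultiplicity_eq_zero (by simp [Polynomial.IsRoot])
      omega
  · obtain ⟨v₀⟩ := hV
    have hfac := charpoly_factor tail head mV mA v₀
    have hBne : (Bmat tail head mV mA v₀).charpoly ≠ 0 := (Matrix.charpoly_monic _).ne_zero
    have hne : (X : ℝ[X]) * (Bmat tail head mV mA v₀).charpoly ≠ 0 :=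
      mul_ne_zero Polynomial.X_ne_zero hBne
    have hmult : (Nmat tail head mV mA).charpoly.rootMultiplicity 0
        = 1 + (Bmat tail head mV mA v₀).charpoly.rootMultiplicity 0 := by
      rw [hfac, Polynomial.rootMultiplicity_mul hne]
      congr 1
      have hX : (X : ℝ[X]) = X - C 0 := by rw [map_zero, sub_zero]
      rw [hX, Polynomial.rootMultiplicity_X_sub_C_self]
    have hiff : (Bmat tail head mV mA v₀).charpoly.rootMultiplicity 0 = 0
        ↔ (Bmat tail head mV mA v₀).det ≠ 0 := by
      have hdet := Matrix.det_eq_sign_charpoly_coeff (Bmat tail head mV mA v₀)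
      have hroot_iff : (Bmat tail head mV mA v₀).charpoly.IsRoot 0
          ↔ (Bmat tail head mV mA v₀).det = 0 := by
        rw [Polynomial.IsRoot, ← Polynomial.coeff_zero_eq_eval_zero, hdet]
        constructor
        · intro h; rw [h, mul_zero]
        · intro h
          rcases mul_eq_zero.1 h with h' | h'
          · exact absurd h' (pow_ne_zero _ (neg_ne_zero.2 one_ne_zero))
          · exact h'
      rw [Polynomial.rootMultiplicity_eq_zero_iff]
      constructor
      · intro h hd0
        exact hBne (h (hroot_iff.2 hd0))
      · intro hd hroot
        exact (hd (hroot_iff.1 hroot)).elim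
    have htwo : ¬(∃ v, ∀ w, Reaches tail head w v) → (Bmat tail head mV mA v₀).det = 0 := by
      intro hng
      obtain ⟨S₁, hS₁, -⟩ := exists_sink_reaches tail head v₀
      obtain ⟨s₁, hs₁⟩ := hS₁.1
      push_neg at hng
      obtain ⟨w, hw⟩ := hng s₁
      obtain ⟨S₂, hS₂, hreach₂⟩ := exists_sink_reaches tail head w
      refine detB_eq_zero_of_two_sinks mV mA v₀ hS₁ hS₂ ?_
      intro x hx₁ hx₂
      exact hw ((hreach₂ x hx₂).trans (hS₁.2.1 x hx₁ s₁ hs₁))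
    rw [hmult]
    constructor
    · intro huniq
      have hg := (global_iff_unique_sink tail head).2 huniq
      have hdet := detB_ne_zero_of_global hmV hmA v₀ hg
      have := hiff.2 hdet
      omega
    · intro h
      have hm0 : (Bmat tail head mV mA v₀).charpoly.rootMultiplicity 0 = 0 := by omega
      have hdet := hiff.1 hm0
      have hg : ∃ v, ∀ w, Reaches tail head w v := by
        by_contra hng
        exact hdet (htwo hng)
      exact (global_iff_unique_sink tail head).1 hg

lemma complex_main (tail head : A → V) {mV : V → ℝ} {mA : A → ℝ}
    (hmV : ∀ v, 0 < mV v) (hmA : ∀ a, 0 < mA a) :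
    (∃! S : Finset V, IsSinkF tail head S) ↔
      (Mminus tail head mV mA).charpoly.rootMultiplicity 0 = 1 := by
  rw [real_main tail head hmV hmA]
  have h1 : (Mminus tail head mV mA).charpoly
      = ((Nmat tail head mV mA).charpoly).map Complex.ofRealHom := by
    rw [Mminus_eq_map, Matrix.charpoly_map]
  have hinj : Function.Injective (Complex.ofRealHom : ℝ →+* ℂ) := by
    intro a b h
    exact Complex.ofReal_injective (by simpa using h)
  have h2 := Polynomial.eq_rootMultiplicity_map
    (p := (Nmat tail head mV mA).charpoly) hinj 0
  rw [map_zero] at h2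
  rw [h1, ← h2]

end Stmt16

/-- A finite weighted digraph has exactly one directed component (equivalently, exactly one
source and exactly one sink) if and only if `0` is a simple eigenvalue (algebraic
multiplicity one) of both `L⁺` and `L⁻`. -/
theorem stmt_16 [Fintype V] [Fintype A] [DecidableEq V]
    (tail head : A → V) (mV : V → ℝ) (mA : A → ℝ)
    (hmV : ∀ v, 0 < mV v) (hmA : ∀ a, 0 < mA a) :
    ((∃! F : Finset V, IsSourceF tail head F) ∧ (∃! S : Finset V, IsSinkF tail head S)) ↔
      ((Mplus tail head mV mA).charpoly.rootMultiplicity 0 = 1 ∧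
        (Mminus tail head mV mA).charpoly.rootMultiplicity 0 = 1) := by
  have hsource : (∃! F : Finset V, IsSourceF tail head F)
      ↔ (∃! F : Finset V, IsSinkF head tail F) := by
    apply existsUnique_congr
    intro F
    constructor
    · rintro ⟨h1, h2, h3, h4⟩
      exact ⟨h1, fun u hu v hv => Stmt16.reaches_rev (h2 v hv u hu),
        fun u hu v r1 r2 => h3 u hu v (Stmt16.reaches_rev r2) (Stmt16.reaches_rev r1), h4⟩
    · rintro ⟨h1, h2, h3, h4⟩
      exact ⟨h1, fun u hu v hv => Stmt16.reaches_rev (h2 v hv u hu),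
        fun u hu v r1 r2 => h3 u hu v (Stmt16.reaches_rev r2) (Stmt16.reaches_rev r1), h4⟩
  have hMp : Mplus tail head mV mA = Mminus head tail mV mA := rfl
  rw [hsource, hMp]
  exact and_congr (Stmt16.complex_main head tail hmV hmA) (Stmt16.complex_main tail head hmV hmA)
end

section
/- If (G,m) is a finite acyclic weighted digraph, then the spectra of both L^+ and L^- are contained in [0,∞); indeed the eigenvalues are exactly the relative weights rel_m^±(v) = m(A_v^±)/m(v), v ∈ V. In particular, for combinatorial weights (m ≡ 1), σ(L^±) ⊆ ℕ₀ consists of the in/out degrees of the vertices. -/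
open Finset Polynomial

variable {V A : Type*}

/-- Acyclicity: no directed cycles. -/
def AcyclicD (tail head : A → V) : Prop :=
  ∀ a : A, ¬ Reaches tail head (head a) (tail a)


section Aux

open Relation

/-- Charpoly of a matrix triangular w.r.t. an injective rank function. -/
lemma charpoly_of_triangular_rank {n R : Type*} [CommRing R] [Fintype n] [DecidableEq n]
    (M : Matrix n n R) (b : n → ℕ) (hb : Function.Injective b)
    (h : ∀ i j, b j < b i → M i j = 0) :
    M.charpoly = ∏ i, (Polynomial.X - Polynomial.C (M i i)) := by
  letI : LinearOrder n := LinearOrder.lift' b hb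
  exact Matrix.charpoly_of_upperTriangular M (fun i j hij => h i j hij)

/-- Dual version: triangular the other way. -/
lemma charpoly_of_triangular_rank' {n R : Type*} [CommRing R] [Fintype n] [DecidableEq n]
    (M : Matrix n n R) (b : n → ℕ) (hb : Function.Injective b)
    (h : ∀ i j, b i < b j → M i j = 0) :
    M.charpoly = ∏ i, (Polynomial.X - Polynomial.C (M i i)) := by
  letI : LinearOrder n :=
    LinearOrder.lift' (fun i => OrderDual.toDual (b i)) fun x y hxy => hb hxy
  exact Matrix.charpoly_of_upperTriangular M (fun i j hij => h i j hij)

lemma reaches_antisymm {V A : Type*} {tail head : A → V} (hacyc : AcyclicD tail head)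
    {u v : V} (huv : Reaches tail head u v) (hvu : Reaches tail head v u) : u = v := by
  rcases Relation.ReflTransGen.cases_head huv with h | ⟨c, ⟨a, ha1, ha2⟩, hc⟩
  · exact h
  · exact absurd (hc.trans hvu) (ha2 ▸ ha1 ▸ hacyc a)

lemma no_selfloop {V A : Type*} {tail head : A → V} (hacyc : AcyclicD tail head)
    (a : A) : tail a ≠ head a := by
  intro h
  exact hacyc a (h ▸ Relation.ReflTransGen.refl)

variable {V A : Type*} [Fintype V] [Fintype A] [DecidableEq V]
  (tail head : A → V)

open Classical in
/-- An injective rank function compatible with reachability. -/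
noncomputable def rankF (v : V) : ℕ :=
  (univ.filter (fun u => Reaches tail head u v)).card * (Fintype.card V + 1) +
    (Fintype.equivFin V v : ℕ)

lemma rankF_injective : Function.Injective (rankF tail head) := by
  intro v w h
  have h2 := congrArg (· % (Fintype.card V + 1)) h
  have hv := (Fintype.equivFin V v).2
  have hw := (Fintype.equivFin V w).2
  simp only [rankF, Nat.mul_comm _ (Fintype.card V + 1), Nat.mul_add_mod] at h2
  rw [Nat.mod_eq_of_lt (by omega), Nat.mod_eq_of_lt (by omega)] at h2
  exact (Fintype.equivFin V).injective (Fin.ext h2)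

lemma rankF_lt (hacyc : AcyclicD tail head) {v w : V}
    (h : Reaches tail head w v) (hne : w ≠ v) : rankF tail head w < rankF tail head v := by
  classical
  have hsub : (univ.filter (fun u => Reaches tail head u w)) ⊂
      (univ.filter (fun u => Reaches tail head u v)) := by
    constructor
    · intro u hu
      simp only [mem_filter, mem_univ, true_and] at hu ⊢
      exact hu.trans h
    · intro hcon
      have hv : v ∈ (univ.filter (fun u => Reaches tail head u v)) := by
        simp only [mem_filter, mem_univ, true_and]
        exact Relation.ReflTransGen.refl
      have := hcon hv
      simp only [mem_filter, mem_univ, true_and] at this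
      exact hne (reaches_antisymm hacyc h this)
  have hcard := Finset.card_lt_card hsub
  unfold rankF
  calc (univ.filter (fun u => Reaches tail head u w)).card * (Fintype.card V + 1) +
        (Fintype.equivFin V w : ℕ)
      < ((univ.filter (fun u => Reaches tail head u w)).card + 1) * (Fintype.card V + 1) := by
        rw [add_mul, one_mul]
        exact Nat.add_lt_add_left (Nat.lt_succ_of_lt (Fintype.equivFin V w).2) _
    _ ≤ (univ.filter (fun u => Reaches tail head u v)).card * (Fintype.card V + 1) :=
        Nat.mul_le_mul_right _ hcard
    _ ≤ _ := Nat.le_add_right _ _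

end Aux

/-- For a finite acyclic weighted digraph the eigenvalues of `L^±` (with multiplicity) are
exactly the relative weights `rel_m^±(v) = m(A_v^±)/m(v)`; hence the spectra lie in `[0,∞)`,
and for combinatorial weights they consist of the (natural number) in/out degrees. -/
theorem stmt_17 [Fintype V] [Fintype A] [DecidableEq V]
    (tail head : A → V) (mV : V → ℝ) (mA : A → ℝ)
    (hmV : ∀ v, 0 < mV v) (hmA : ∀ a, 0 < mA a)
    (hacyc : AcyclicD tail head) :
    ((Mplus tail head mV mA).charpoly =
      ∏ v : V, (Polynomial.X - Polynomial.C
        ((((∑ a ∈ univ.filter (fun a => head a = v), mA a) / mV v : ℝ)) : ℂ))) ∧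
    ((Mminus tail head mV mA).charpoly =
      ∏ v : V, (Polynomial.X - Polynomial.C
        ((((∑ a ∈ univ.filter (fun a => tail a = v), mA a) / mV v : ℝ)) : ℂ))) ∧
    (∀ μ ∈ (Mplus tail head mV mA).charpoly.roots, ∃ r : ℝ, 0 ≤ r ∧ μ = (r : ℂ)) ∧
    (∀ μ ∈ (Mminus tail head mV mA).charpoly.roots, ∃ r : ℝ, 0 ≤ r ∧ μ = (r : ℂ)) ∧
    ((∀ v, mV v = 1) → (∀ a, mA a = 1) →
      (∀ μ ∈ (Mplus tail head mV mA).charpoly.roots, ∃ n : ℕ, μ = (n : ℂ)) ∧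
      (∀ μ ∈ (Mminus tail head mV mA).charpoly.roots, ∃ n : ℕ, μ = (n : ℂ))) := by
  classical
  set b := rankF tail head with hb
  have hbinj := rankF_injective tail head
  -- diagonal entries
  have hPdiag : ∀ v, Mplus tail head mV mA v v =
      ((((∑ a ∈ univ.filter (fun a => head a = v), mA a) / mV v : ℝ)) : ℂ) := by
    intro v
    have hterm : ∀ a ∈ univ.filter (fun a => head a = v),
        ((1:ℂ) - (if tail a = v then 1 else 0)) * (mA a : ℂ)
          = (mA a : ℂ) := by
      intro a ha
      simp only [mem_filter, mem_univ, true_and] at ha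
      rw [ if_neg (fun h => no_selfloop hacyc a (h.trans ha.symm))]
      ring
    simp only [Mplus, Lplus, if_true]
    rw [Finset.sum_congr rfl hterm]
    push_cast
    rw [div_eq_inv_mul]
  have hMdiag : ∀ v, Mminus tail head mV mA v v =
      ((((∑ a ∈ univ.filter (fun a => tail a = v), mA a) / mV v : ℝ)) : ℂ) := by
    intro v
    have hterm : ∀ a ∈ univ.filter (fun a => tail a = v),
        ((1:ℂ) - (if head a = v then 1 else 0)) * (mA a : ℂ)
          = (mA a : ℂ) := by
      intro a ha
      simp only [mem_filter, mem_univ, true_and] at ha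
      rw [ if_neg (fun h => no_selfloop hacyc a (ha.trans h.symm))]
      ring
    simp only [Mminus, Lminus, if_true]
    rw [Finset.sum_congr rfl hterm]
    push_cast
    rw [div_eq_inv_mul]
  -- triangularity
  have hPtri : ∀ i j, b i < b j → Mplus tail head mV mA i j = 0 := by
    intro i j hlt
    have hne : i ≠ j := fun h => lt_irrefl _ (h ▸ hlt)
    simp only [Mplus, Lplus]
    rw [Finset.sum_eq_zero, mul_zero]
    intro a ha
    simp only [mem_filter, mem_univ, true_and] at ha
    have htj : tail a ≠ j := by
      intro htj
      have hr : Reaches tail head j i := Relation.ReflTransGen.single ⟨a, htj, ha⟩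
      exact absurd (rankF_lt tail head hacyc hr (Ne.symm hne)) (not_lt_of_gt hlt)
    rw [if_neg hne, if_neg htj]
    ring
  have hMtri : ∀ i j, b j < b i → Mminus tail head mV mA i j = 0 := by
    intro i j hlt
    have hne : i ≠ j := fun h => lt_irrefl _ (h ▸ hlt)
    simp only [Mminus, Lminus]
    rw [Finset.sum_eq_zero, mul_zero]
    intro a ha
    simp only [mem_filter, mem_univ, true_and] at ha
    have hhj : head a ≠ j := by
      intro hhj
      have hr : Reaches tail head i j := Relation.ReflTransGen.single ⟨a, ha, hhj⟩
      exact absurd (rankF_lt tail head hacyc hr hne) (not_lt_of_gt hlt)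
    rw [if_neg hne, if_neg hhj]
    ring
  -- charpolys
  have hP : (Mplus tail head mV mA).charpoly =
      ∏ v : V, (Polynomial.X - Polynomial.C
        ((((∑ a ∈ univ.filter (fun a => head a = v), mA a) / mV v : ℝ)) : ℂ)) := by
    rw [charpoly_of_triangular_rank' _ b hbinj hPtri]
    exact Finset.prod_congr rfl fun v _ => by rw [hPdiag v]
  have hM : (Mminus tail head mV mA).charpoly =
      ∏ v : V, (Polynomial.X - Polynomial.C
        ((((∑ a ∈ univ.filter (fun a => tail a = v), mA a) / mV v : ℝ)) : ℂ)) := by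
    rw [charpoly_of_triangular_rank _ b hbinj hMtri]
    exact Finset.prod_congr rfl fun v _ => by rw [hMdiag v]
  -- roots of a product of linear factors
  have key : ∀ (c : V → ℝ),
      ∀ μ ∈ (∏ v : V, (Polynomial.X - Polynomial.C ((c v : ℂ)))).roots,
        ∃ v : V, μ = ((c v : ℝ) : ℂ) := by
    intro c μ hμ
    have hne : (∏ v : V, (Polynomial.X - Polynomial.C ((c v : ℂ)))) ≠ 0 :=
      (monic_prod_of_monic _ _ fun v _ => monic_X_sub_C _).ne_zero
    have hroot := (Polynomial.mem_roots hne).mp hμ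
    rw [Polynomial.IsRoot, Polynomial.eval_prod] at hroot
    obtain ⟨v, _, hv⟩ := Finset.prod_eq_zero_iff.mp hroot
    simp only [Polynomial.eval_sub, Polynomial.eval_X, Polynomial.eval_C, sub_eq_zero] at hv
    exact ⟨v, hv⟩
  refine ⟨hP, hM, ?_, ?_, ?_⟩
  · intro μ hμ
    rw [hP] at hμ
    obtain ⟨v, hv⟩ := key _ μ hμ
    exact ⟨_, div_nonneg (Finset.sum_nonneg fun a _ => (hmA a).le) (hmV v).le, hv⟩
  · intro μ hμ
    rw [hM] at hμ
    obtain ⟨v, hv⟩ := key _ μ hμ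
    exact ⟨_, div_nonneg (Finset.sum_nonneg fun a _ => (hmA a).le) (hmV v).le, hv⟩
  · intro hm1 ha1
    constructor
    · intro μ hμ
      rw [hP] at hμ
      obtain ⟨v, hv⟩ := key _ μ hμ
      refine ⟨(univ.filter (fun a => head a = v)).card, ?_⟩
      rw [hv]
      simp [hm1, ha1]
    · intro μ hμ
      rw [hM] at hμ
      obtain ⟨v, hv⟩ := key _ μ hμ
      refine ⟨(univ.filter (fun a => tail a = v)).card, ?_⟩
      rw [hv]
      simp [hm1, ha1]
end

section
/- Let N be a transportation network with source x, sink y, capacity function c > 0 on arcs (viewed as arc weights, with vertex weights 1), and let X ⊂ V with x ∈ X, y ∉ X. Then (i) the capacity of the out-cut K^+ = A^+(X, X^c) satisfies cap(K^+) = ⟨𝟙_X, L^- 𝟙_X⟩_{ℓ²(V)}, where L^- is the out Laplacian with arc weights c; and (ii) for any (x,y)-flow η, its value satisfies val(η) = -⟨d 𝟙_X, η/c⟩_{ℓ²(A,c)}. -/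
open Finset

variable {V A : Type*}

/-- In a transportation network with source `x`, sink `y` and capacity `c` (viewed as arc
weights, vertex weights `1`), for a vertex set `X` with `x ∈ X`, `y ∉ X`:
(i) the capacity of the out-cut `K⁺ = A⁺(X, Xᶜ)` equals `⟨𝟙_X, L⁻ 𝟙_X⟩_{ℓ²(V)}`, where
`L⁻` is the out Laplacian with arc weights `c`; and (ii) the value of any `(x,y)`-flow `η`
equals `-⟨d 𝟙_X, η/c⟩_{ℓ²(A,c)}`. -/
theorem stmt_19 [Fintype V] [Fintype A] [DecidableEq V]
    (tail head : A → V) (x y : V) (c : A → ℝ) (hc : ∀ a, 0 < c a)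
    (hx : ∀ a, head a ≠ x) (hy : ∀ a, tail a ≠ y)
    (X : Finset V) (hxX : x ∈ X) (hyX : y ∉ X) :
    ((∑ a ∈ univ.filter (fun a => tail a ∈ X ∧ head a ∉ X), c a) =
      ∑ v, (if v ∈ X then (1 : ℝ) else 0) *
        (∑ a ∈ univ.filter (fun a => tail a = v),
          ((if v ∈ X then (1 : ℝ) else 0) - (if head a ∈ X then (1 : ℝ) else 0)) * c a)) ∧
    (∀ η : A → ℝ,
      (∀ v, v ≠ x → v ≠ y →
        ∑ a ∈ univ.filter (fun a => head a = v), η a =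
          ∑ a ∈ univ.filter (fun a => tail a = v), η a) →
      (∑ a ∈ univ.filter (fun a => tail a = x), η a) =
        -∑ a, ((if head a ∈ X then (1 : ℝ) else 0) - (if tail a ∈ X then (1 : ℝ) else 0)) *
          (η a / c a) * c a) := by
  classical
  -- generic fiberwise collapsing lemma
  have fiber : ∀ (g : A → V) (f : A → ℝ),
      (∑ v, (if v ∈ X then (1 : ℝ) else 0) * ∑ a ∈ univ.filter (fun a => g a = v), f a)
        = ∑ a, (if g a ∈ X then (1 : ℝ) else 0) * f a := by
    intro g f
    rw [← Finset.sum_fiberwise univ g (fun a => (if g a ∈ X then (1 : ℝ) else 0) * f a)]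
    refine Finset.sum_congr rfl fun v _ => ?_
    rw [Finset.mul_sum]
    refine Finset.sum_congr rfl fun a ha => ?_
    rw [Finset.mem_filter] at ha
    rw [ha.2]
  constructor
  · -- capacity identity
    have h1 : (∑ v, (if v ∈ X then (1 : ℝ) else 0) *
        (∑ a ∈ univ.filter (fun a => tail a = v),
          ((if v ∈ X then (1 : ℝ) else 0) - (if head a ∈ X then (1 : ℝ) else 0)) * c a))
        = ∑ v, (if v ∈ X then (1 : ℝ) else 0) *
        (∑ a ∈ univ.filter (fun a => tail a = v),
          ((if tail a ∈ X then (1 : ℝ) else 0) - (if head a ∈ X then (1 : ℝ) else 0)) * c a) := by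
      refine Finset.sum_congr rfl fun v _ => ?_
      congr 1
      refine Finset.sum_congr rfl fun a ha => ?_
      rw [Finset.mem_filter] at ha
      rw [ha.2]
    rw [h1, fiber tail (fun a => ((if tail a ∈ X then (1 : ℝ) else 0) - (if head a ∈ X then (1 : ℝ) else 0)) * c a)]
    rw [Finset.sum_filter]
    refine Finset.sum_congr rfl fun a _ => ?_
    by_cases h1 : tail a ∈ X <;> by_cases h2 : head a ∈ X <;> simp [h1, h2]
  · intro η hcons
    have hsimp : ∀ a, ((if head a ∈ X then (1 : ℝ) else 0) - (if tail a ∈ X then (1 : ℝ) else 0)) *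
        (η a / c a) * c a =
        (if head a ∈ X then (1 : ℝ) else 0) * η a - (if tail a ∈ X then (1 : ℝ) else 0) * η a := by
      intro a
      rw [mul_assoc, div_mul_cancel₀ _ (hc a).ne']
      ring
    simp only [hsimp]
    rw [Finset.sum_sub_distrib, neg_sub]
    rw [← fiber tail η, ← fiber head η]
    rw [← Finset.sum_sub_distrib]
    have h2 : ∀ v, (if v ∈ X then (1 : ℝ) else 0) * (∑ a ∈ univ.filter (fun a => tail a = v), η a)
        - (if v ∈ X then (1 : ℝ) else 0) * (∑ a ∈ univ.filter (fun a => head a = v), η a)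
        = if v = x then ∑ a ∈ univ.filter (fun a => tail a = x), η a else 0 := by
      intro v
      by_cases hv : v = x
      · subst hv
        have hempty : univ.filter (fun a => head a = v) = ∅ := by
          ext a; simp [hx a]
        simp [hxX, hempty]
      · by_cases hvX : v ∈ X
        · have hvy : v ≠ y := fun h => hyX (h ▸ hvX)
          rw [hcons v hv hvy]
          simp [hv]
        · simp [hvX, hv]
      
    simp only [h2]
    rw [Finset.sum_ite_eq' univ x (fun _ => ∑ a ∈ univ.filter (fun a => tail a = x), η a)]
    simp
end
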